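/- Let H be a complex Hilbert space and let M ⊆ B(H) be a von Neumann algebra (a unital *-subalgebra of B(H) equal to its double commutant) which is a factor, i.e., the centre M ∩ M′ consists only of scalar multiples of the identity. Then the identity map id : M → M is pure in the cone CP(M, M) of completely positive linear maps. (This is an instance of the lemma that the identity map on any AW*-factor is pure, since every von Neumann factor is an AW*-factor.) -/

import Mathlib

/-!
For a completely positive `φ` on a unital *-algebra `A ⊆ B(H)` and `x ∈ A`, the matrix
`[x 1]⋆[x 1]` is positive, hence so is `[[φ(x⋆x), φ(x⋆)], [φ(x), φ(1)]]`. Compressing it to the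
vectors `(ξ, -xξ + tη)` shows that the Schwarz defect `φ(x⋆x) - φ(x⋆)x - x⋆φ(x) + x⋆φ(1)x` is
positive, and that where it vanishes `φ(x) = φ(1)x` and `φ(x⋆) = x⋆φ(1)`. If `ϑ + ω = id`, the
defects of `ϑ` and `ω` are positive and add up to the defect of the identity, which is `0`. So
`ϑ(1)` commutes with `M`, hence `ϑ(1) = λ` in a factor, `ϑ = λ id`, `ω = (1 - λ) id`, and the
positivity of `ϑ(1)` and `ω(1)` gives `0 ≤ λ ≤ 1`.
-/

open scoped ComplexOrder InnerProductSpace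

/-- An `m × m` matrix of operators on a Hilbert space `H` is positive if the
corresponding operator on the direct sum `H^{⊕m}` is positive, i.e. its quadratic
form is nonnegative. -/
def OpMatPos {H : Type*} [NormedAddCommGroup H] [InnerProductSpace ℂ H] {m : ℕ}
    (x : Fin m → Fin m → (H →L[ℂ] H)) : Prop :=
  ∀ v : Fin m → H, 0 ≤ ∑ i, ∑ j, ⟪x i j (v j), v i⟫_ℂ

/-- Complete positivity for a linear map from a subspace `S ⊆ B(H)` into `B(H)`. -/
def IsCPop {H : Type*} [NormedAddCommGroup H] [InnerProductSpace ℂ H]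
    (S : Submodule ℂ (H →L[ℂ] H)) (φ : S →ₗ[ℂ] (H →L[ℂ] H)) : Prop :=
  ∀ (m : ℕ) (x : Fin m → Fin m → S),
    OpMatPos (fun i j => (x i j : H →L[ℂ] H)) →
    OpMatPos (fun i j => φ (x i j))

open ComplexConjugate

lemma Complex.eq_zero_of_forall_real_quadratic_nonneg {z C : ℂ}
    (h : ∀ r : ℝ, 0 ≤ r * z + r ^ 2 * C) : z = 0 := by
  have h' (r : ℝ) : 0 ≤ r * z.re + r ^ 2 * C.re ∧ 0 = r * z.im + r ^ 2 * C.im := by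
    simpa only [add_re, add_im, zero_re, zero_im, ← ofReal_pow, re_ofReal_mul, im_ofReal_mul]
      using Complex.le_def.1 (h r)
  have hre : discrim C.re z.re 0 ≤ 0 := discrim_le_zero fun r => by linarith [(h' r).1]
  have him : z.im = 0 := by linarith [(h' 1).2, (h' (-1)).2]
  rw [discrim, mul_zero, sub_zero] at hre
  exact Complex.ext (pow_eq_zero_iff two_ne_zero |>.1 (hre.antisymm (sq_nonneg _))) him

lemma Complex.eq_zero_of_forall_quadratic_nonneg {B B' C : ℂ}
    (h : ∀ t : ℂ, 0 ≤ conj t * B' + t * B + conj t * t * C) : B = 0 ∧ B' = 0 := by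
  have hsum : B' + B = 0 := eq_zero_of_forall_real_quadratic_nonneg (C := C) fun r => by
    convert h r using 1
    simp only [conj_ofReal]; ring
  have hdiff : I * (B - B') = 0 := eq_zero_of_forall_real_quadratic_nonneg (C := C) fun r => by
    convert h (r * I) using 1
    simp only [map_mul, conj_ofReal, conj_I]
    linear_combination ((r : ℂ) ^ 2 * C) * I_sq
  have hdiff' := (mul_eq_zero.1 hdiff).resolve_left I_ne_zero
  exact ⟨by linear_combination (hsum + hdiff') / 2, by linear_combination (hsum - hdiff') / 2⟩

lemma Complex.nonneg_of_ofReal_mul_nonneg {r : ℝ} {c : ℂ} (h : 0 ≤ r * c) (hr : 0 < r) : 0 ≤ c := by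
  have := mul_nonneg (zero_le_real.2 (inv_nonneg.2 hr.le)) h
  rwa [← mul_assoc, ← ofReal_mul, inv_mul_cancel₀ hr.ne', ofReal_one, one_mul] at this

section CompletelyPositive

variable {H : Type*} [NormedAddCommGroup H] [InnerProductSpace ℂ H]

lemma IsCPop.inner_map_nonneg {S : Submodule ℂ (H →L[ℂ] H)} {φ : S →ₗ[ℂ] (H →L[ℂ] H)}
    (hφ : IsCPop S φ) {x : S} (hx : ∀ v, 0 ≤ ⟪(x : H →L[ℂ] H) v, v⟫_ℂ) (v : H) :
    0 ≤ ⟪φ x v, v⟫_ℂ := by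
  simpa using hφ 1 (fun _ _ => x) (fun w => by simpa using hx (w 0)) (fun _ => v)

variable [CompleteSpace H]

lemma opMatPos_star_mul {m : ℕ} (a : Fin m → (H →L[ℂ] H)) :
    OpMatPos fun i j => star (a i) * a j := by
  intro v
  have h : ∀ i j, ⟪(star (a i) * a j) (v j), v i⟫_ℂ = ⟪a j (v j), a i (v i)⟫_ℂ := fun i j => by
    rw [ContinuousLinearMap.star_eq_adjoint, mul_apply_eq_comp,
      ContinuousLinearMap.adjoint_inner_left]
  simp only [h, ← inner_sum, ← sum_inner]
  simp [inner_self_eq_norm_sq_to_K]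

variable {A : StarSubalgebra ℂ (H →L[ℂ] H)}

def StarSubalgebra.toSubmoduleElem (x : A) : Subalgebra.toSubmodule A.toSubalgebra := ⟨x, x.2⟩

open StarSubalgebra

@[simp] lemma StarSubalgebra.coe_toSubmoduleElem (x : A) :
    (toSubmoduleElem x : H →L[ℂ] H) = x := rfl

lemma IsCPop.inner_two_by_two_nonneg {φ : Subalgebra.toSubmodule A.toSubalgebra →ₗ[ℂ] (H →L[ℂ] H)}
    (hφ : IsCPop _ φ) (x : A) (ξ ζ : H) :
    0 ≤ ⟪φ (toSubmoduleElem (star x * x)) ξ, ξ⟫_ℂ + ⟪φ (toSubmoduleElem (star x)) ζ, ξ⟫_ℂ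
      + ⟪φ (toSubmoduleElem x) ξ, ζ⟫_ℂ + ⟪φ (toSubmoduleElem 1) ζ, ζ⟫_ℂ := by
  have hpos : OpMatPos fun i j =>
      ((![![toSubmoduleElem (star x * x), toSubmoduleElem (star x)],
        ![toSubmoduleElem x, toSubmoduleElem 1]] i j : Subalgebra.toSubmodule A.toSubalgebra) :
        H →L[ℂ] H) := by
    convert opMatPos_star_mul ![(x : H →L[ℂ] H), 1] using 1
    funext i j
    fin_cases i <;> fin_cases j <;> simp
  simpa [Fin.sum_univ_two, add_assoc] using hφ 2 _ hpos ![ξ, ζ]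

section SchwarzDefect

variable (φ : Subalgebra.toSubmodule A.toSubalgebra →ₗ[ℂ] (H →L[ℂ] H))

noncomputable def schwarzDefect (x : A) : H →L[ℂ] H :=
  φ (toSubmoduleElem (star x * x)) - φ (toSubmoduleElem (star x)) * x
    - star (x : H →L[ℂ] H) * φ (toSubmoduleElem x)
    + star (x : H →L[ℂ] H) * φ (toSubmoduleElem 1) * x

lemma inner_schwarzDefect_apply_self (x : A) (ξ : H) :
    ⟪schwarzDefect φ x ξ, ξ⟫_ℂ = ⟪φ (toSubmoduleElem (star x * x)) ξ, ξ⟫_ℂ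
      - ⟪φ (toSubmoduleElem (star x)) ((x : H →L[ℂ] H) ξ), ξ⟫_ℂ
      - ⟪φ (toSubmoduleElem x) ξ, (x : H →L[ℂ] H) ξ⟫_ℂ
      + ⟪φ (toSubmoduleElem 1) ((x : H →L[ℂ] H) ξ), (x : H →L[ℂ] H) ξ⟫_ℂ := by
  simp only [schwarzDefect, add_apply, sub_apply, mul_apply_eq_comp, inner_add_left, inner_sub_left,
    ContinuousLinearMap.star_eq_adjoint, ContinuousLinearMap.adjoint_inner_left]

lemma schwarzDefect_add (ψ : Subalgebra.toSubmodule A.toSubalgebra →ₗ[ℂ] (H →L[ℂ] H)) (x : A) :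
    schwarzDefect (φ + ψ) x = schwarzDefect φ x + schwarzDefect ψ x := by
  simp only [schwarzDefect, LinearMap.add_apply]
  noncomm_ring

lemma schwarzDefect_subtype (x : A) :
    schwarzDefect (Subalgebra.toSubmodule A.toSubalgebra).subtype x = 0 := by
  simp only [schwarzDefect, Submodule.subtype_apply, coe_toSubmoduleElem, StarMemClass.coe_star,
    MulMemClass.coe_mul, OneMemClass.coe_one]
  noncomm_ring

variable {φ}

lemma IsCPop.inner_schwarzDefect_nonneg (hφ : IsCPop _ φ) (x : A) (ξ : H) :
    0 ≤ ⟪schwarzDefect φ x ξ, ξ⟫_ℂ := by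
  simpa [inner_schwarzDefect_apply_self, sub_eq_add_neg, add_assoc]
    using hφ.inner_two_by_two_nonneg x ξ (-(x : H →L[ℂ] H) ξ)

lemma IsCPop.map_eq_of_inner_schwarzDefect_eq_zero (hφ : IsCPop _ φ) {x : A}
    (hx : ∀ ξ, ⟪schwarzDefect φ x ξ, ξ⟫_ℂ = 0) :
    φ (toSubmoduleElem x) = φ (toSubmoduleElem 1) * x ∧
      φ (toSubmoduleElem (star x)) = star (x : H →L[ℂ] H) * φ (toSubmoduleElem 1) := by
  have hinner : ∀ ξ η,
      ⟪φ (toSubmoduleElem x) ξ, η⟫_ℂ - ⟪φ (toSubmoduleElem 1) ((x : H →L[ℂ] H) ξ), η⟫_ℂ = 0 ∧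
      ⟪φ (toSubmoduleElem (star x)) η, ξ⟫_ℂ
        - ⟪φ (toSubmoduleElem 1) η, (x : H →L[ℂ] H) ξ⟫_ℂ = 0 := by
    intro ξ η
    have hξ := hx ξ
    rw [inner_schwarzDefect_apply_self] at hξ
    -- with `ζ = -x ξ + t η` the two-by-two inequality is a quadratic in `t` with zero constant term
    refine Complex.eq_zero_of_forall_quadratic_nonneg
      (C := ⟪φ (toSubmoduleElem 1) η, η⟫_ℂ) fun t => ?_
    convert hφ.inner_two_by_two_nonneg x ξ (-(x : H →L[ℂ] H) ξ + t • η) using 1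
    simp only [map_add, map_neg, map_smul, inner_add_left, inner_add_right, inner_neg_left,
      inner_neg_right, inner_smul_left, inner_smul_right]
    linear_combination -hξ
  constructor
  · ext1 ξ
    refine ext_inner_right ℂ fun η => ?_
    rw [mul_apply_eq_comp, sub_eq_zero.1 (hinner ξ η).1]
  · ext1 η
    refine ext_inner_right ℂ fun ξ => ?_
    rw [mul_apply_eq_comp, ContinuousLinearMap.star_eq_adjoint,
      ContinuousLinearMap.adjoint_inner_left, sub_eq_zero.1 (hinner ξ η).2]

end SchwarzDefect

variable {ϑ ω : Subalgebra.toSubmodule A.toSubalgebra →ₗ[ℂ] (H →L[ℂ] H)}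

lemma IsCPop.map_eq_mul_and_eq_mul_of_add_eq_subtype (hϑ : IsCPop _ ϑ) (hω : IsCPop _ ω)
    (hsum : ϑ + ω = (Subalgebra.toSubmodule A.toSubalgebra).subtype)
    (x : Subalgebra.toSubmodule A.toSubalgebra) :
    ϑ x = ϑ (toSubmoduleElem 1) * x ∧ ϑ x = x * ϑ (toSubmoduleElem 1) := by
  have hD (y : A) (ξ : H) : ⟪schwarzDefect ϑ y ξ, ξ⟫_ℂ = 0 := by
    refine ((add_eq_zero_iff_of_nonneg (hϑ.inner_schwarzDefect_nonneg y ξ)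
      (hω.inner_schwarzDefect_nonneg y ξ)).1 ?_).1
    rw [← inner_add_left, ← add_apply, ← schwarzDefect_add, hsum, schwarzDefect_subtype,
      zero_apply, inner_zero_left]
  let y : A := ⟨x, x.2⟩
  refine ⟨(hϑ.map_eq_of_inner_schwarzDefect_eq_zero (hD y)).1, ?_⟩
  have h := (hϑ.map_eq_of_inner_schwarzDefect_eq_zero (hD (star y))).2
  rw [star_star, StarMemClass.coe_star, star_star] at h
  exact h

lemma IsCPop.nonneg_of_eq_smul_subtype [Nontrivial H] {c : ℂ} (hϑ : IsCPop _ ϑ)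
    (hc : ϑ = c • (Subalgebra.toSubmodule A.toSubalgebra).subtype) : 0 ≤ c := by
  obtain ⟨v, hv⟩ := exists_ne (0 : H)
  have h := hϑ.inner_map_nonneg (x := toSubmoduleElem 1) (fun w => by simp) v
  rw [hc] at h
  have hv' : 0 ≤ ((‖v‖ ^ 2 : ℝ) : ℂ) * conj c := by
    simpa [inner_smul_left, inner_self_eq_norm_sq_to_K] using h
  exact star_nonneg_iff.1 (Complex.nonneg_of_ofReal_mul_nonneg hv' (by positivity))

end CompletelyPositive

/-- Maps `M → M` are maps `M → B(H)` with values in `M`; the identity map is the inclusion. -/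
theorem identity_map_on_vonNeumann_factor_is_pure
    {H : Type*} [NormedAddCommGroup H] [InnerProductSpace ℂ H] [CompleteSpace H]
    (M : VonNeumannAlgebra H)
    (hfactor : ∀ c : H →L[ℂ] H, c ∈ M → (∀ y ∈ M, c * y = y * c) →
      ∃ lam : ℂ, c = lam • 1) :
    ∀ ϑ ω : (Subalgebra.toSubmodule M.toStarSubalgebra.toSubalgebra) →ₗ[ℂ] (H →L[ℂ] H),
      IsCPop (Subalgebra.toSubmodule M.toStarSubalgebra.toSubalgebra) ϑ →
      IsCPop (Subalgebra.toSubmodule M.toStarSubalgebra.toSubalgebra) ω →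
      (∀ x, ϑ x ∈ M) → (∀ x, ω x ∈ M) →
      ϑ + ω = (Subalgebra.toSubmodule M.toStarSubalgebra.toSubalgebra).subtype →
      ∃ s : ℝ, 0 ≤ s ∧ s ≤ 1 ∧
        ϑ = (s : ℂ) • (Subalgebra.toSubmodule M.toStarSubalgebra.toSubalgebra).subtype ∧
        ω = ((1 - s : ℝ) : ℂ) • (Subalgebra.toSubmodule M.toStarSubalgebra.toSubalgebra).subtype := by
  intro ϑ ω hϑ hω hϑM _ hsum
  have hmul := hϑ.map_eq_mul_and_eq_mul_of_add_eq_subtype hω hsum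
  obtain ⟨c, hc⟩ := hfactor _ (hϑM (StarSubalgebra.toSubmoduleElem 1)) fun y hy =>
    (hmul ⟨y, hy⟩).1.symm.trans (hmul ⟨y, hy⟩).2
  have hϑc : ϑ = c • (Subalgebra.toSubmodule M.toStarSubalgebra.toSubalgebra).subtype :=
    LinearMap.ext fun x => by simp [(hmul x).1, hc]
  have hωc : ω = (1 - c) • (Subalgebra.toSubmodule M.toStarSubalgebra.toSubalgebra).subtype := by
    rw [eq_sub_of_add_eq' hsum, hϑc]
    module
  rcases subsingleton_or_nontrivial H with hH | hH
  · exact ⟨0, le_rfl, zero_le_one, Subsingleton.elim _ _, Subsingleton.elim _ _⟩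
  have hc₀ := hϑ.nonneg_of_eq_smul_subtype hϑc
  have hc₁ := hω.nonneg_of_eq_smul_subtype hωc
  obtain ⟨s, rfl⟩ : ∃ s : ℝ, c = s :=
    ⟨c.re, Complex.eq_re_of_ofReal_le (r := 0) (by rwa [Complex.ofReal_zero])⟩
  refine ⟨s, Complex.zero_le_real.1 hc₀, ?_, hϑc, by rw [hωc]; push_cast; rfl⟩
  exact_mod_cast sub_nonneg.1 hc₁
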